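/- arXiv:1102.4683 — 2 statements merged into one kernel-verified Lean document; each statement's English description precedes it below -/
import Mathlib

section
/- Let q > 1, γ ≥ 1, and suppose measurable nonnegative functions u, v, w on Q_T satisfy ‖u‖_{L^{q+γ}(Q_T)} ≤ C₂(1 + ‖w‖_{L^{q+γ}(Q_T)}), ‖v‖_{L^{q+γ}(Q_T)} ≤ C₃(1 + ‖w‖_{L^{q+γ}(Q_T)}), and ∫∫_{Q_T} w^{q+γ} ≤ ∫∫_{Q_T} u^α v^β w^q + K₀ for some constants C₂, C₃, K₀ ≥ 0 and exponents α, β ≥ 1 with α + β < γ. Assume also 1/r + 1/s + q/(q+γ) = 1 with rα ≤ q+γ, sβ ≤ q+γ. Then ‖w‖_{L^{q+γ}(Q_T)} is bounded by a constant depending only on C₂, C₃, K₀, α, β, γ, q, and |Q_T|. -/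
/-!
Hölder's inequality with the constant function `1` as a fourth factor bounds
`∫ u^α v^β w^q` by `|Q_T|^θ ‖u‖^α ‖v‖^β ‖w‖^q` in `L^(q+γ)`, where `θ = 1 - (α+β+q)/(q+γ) > 0`.
The bounds on `‖u‖, ‖v‖` then turn the energy inequality into
`‖w‖^(q+γ) ≤ K (1 + ‖w‖)^(α+β+q)`, and since `α + β + q < q + γ` this forces `‖w‖` to be
bounded by a constant depending only on `K` and the exponents.
-/

open MeasureTheory
open scoped ENNReal

theorem Real.rpow_div_le_rpow_of_rpow_one_div_le {I N c P : ℝ} (hI : 0 ≤ I) (hc : 0 ≤ c)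
    (h : I ^ (1 / P) ≤ N) : I ^ (c / P) ≤ N ^ c := by
  rw [div_eq_mul_one_div c, mul_comm, Real.rpow_mul hI]
  exact Real.rpow_le_rpow (Real.rpow_nonneg hI _) h hc

theorem le_max_one_of_rpow_le_mul_one_add_rpow {M A σ P : ℝ} (hM : 0 ≤ M) (hσ : 0 ≤ σ)
    (hσP : σ < P) (h : M ^ P ≤ A * (1 + M) ^ σ) :
    M ≤ max 1 ((2 ^ σ * A) ^ (1 / (P - σ))) := by
  rcases le_or_gt M 1 with hM1 | hM1
  · exact le_max_of_le_left hM1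
  refine le_max_of_le_right ?_
  have hM₀ : 0 < M := by linarith
  have hMσ : 0 < M ^ σ := Real.rpow_pos_of_pos hM₀ σ
  have hdom : M ^ σ * M ^ (P - σ) ≤ M ^ σ * (2 ^ σ * A) := calc
    M ^ σ * M ^ (P - σ) = M ^ P := by rw [← Real.rpow_add hM₀, add_sub_cancel]
    _ ≤ A * (1 + M) ^ σ := h
    _ ≤ A * (2 * M) ^ σ := by
        have hA : 0 ≤ A :=
          nonneg_of_mul_nonneg_left ((Real.rpow_nonneg hM P).trans h) (by positivity)
        gcongr
        linarith
    _ = M ^ σ * (2 ^ σ * A) := by rw [Real.mul_rpow zero_le_two hM]; ring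
  calc M = (M ^ (P - σ)) ^ (1 / (P - σ)) := by
        rw [← Real.rpow_mul hM, mul_one_div_cancel (sub_pos.2 hσP).ne', Real.rpow_one]
    _ ≤ (2 ^ σ * A) ^ (1 / (P - σ)) := by
        gcongr
        exact le_of_mul_le_mul_left hdom hMσ

namespace MeasureTheory

variable {X ι : Type*} [MeasurableSpace X] {μ : Measure X}

theorem lintegral_prod_rpow_le_measure_univ_rpow_mul (s : Finset ι) {f : ι → X → ℝ≥0∞}
    (hf : ∀ i ∈ s, AEMeasurable (f i) μ) {p : ι → ℝ} (hp : ∑ i ∈ s, p i ≤ 1)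
    (hp₀ : ∀ i ∈ s, 0 ≤ p i) :
    ∫⁻ x, ∏ i ∈ s, f i x ^ p i ∂μ ≤
      μ Set.univ ^ (1 - ∑ i ∈ s, p i) * ∏ i ∈ s, (∫⁻ x, f i x ∂μ) ^ p i := by
  simpa using ENNReal.lintegral_mul_prod_norm_pow_le s (g := 1) aemeasurable_const hf
    (1 - ∑ i ∈ s, p i) (sub_add_cancel _ _) (sub_nonneg.2 hp) hp₀

theorem ofReal_integral_rpow_eq_lintegral {f : X → ℝ} {P : ℝ} (hP : 0 < P) (hf₀ : 0 ≤ f)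
    (hf : MemLp f (ENNReal.ofReal P) μ) :
    ENNReal.ofReal (∫ x, f x ^ P ∂μ) = ∫⁻ x, ENNReal.ofReal (f x ^ P) ∂μ := by
  refine ofReal_integral_eq_lintegral_ofReal ?_ (.of_forall fun x => Real.rpow_nonneg (hf₀ x) P)
  simpa [ENNReal.toReal_ofReal hP.le, Real.norm_of_nonneg (hf₀ _)] using
    hf.integrable_norm_rpow (ENNReal.ofReal_pos.mpr hP).ne' ENNReal.ofReal_ne_top

theorem integral_prod_rpow_le [IsFiniteMeasure μ] (s : Finset ι) {f : ι → X → ℝ} {a : ι → ℝ}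
    {P : ℝ} (hP : 0 < P) (hf₀ : ∀ i ∈ s, 0 ≤ f i)
    (hf : ∀ i ∈ s, MemLp (f i) (ENNReal.ofReal P) μ) (ha : ∀ i ∈ s, 0 ≤ a i)
    (haP : ∑ i ∈ s, a i ≤ P) :
    ∫ x, ∏ i ∈ s, f i x ^ a i ∂μ ≤
      μ.real Set.univ ^ (1 - (∑ i ∈ s, a i) / P) *
        ∏ i ∈ s, (∫ x, f i x ^ P ∂μ) ^ (a i / P) := by
  have hpow : ∀ i ∈ s, ∀ x,
      ENNReal.ofReal (f i x ^ P) ^ (a i / P) = ENNReal.ofReal (f i x ^ a i) := by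
    intro i hi x
    rw [ENNReal.ofReal_rpow_of_nonneg (Real.rpow_nonneg (hf₀ i hi x) P)
      (div_nonneg (ha i hi) hP.le), ← Real.rpow_mul (hf₀ i hi x), mul_div_cancel₀ _ hP.ne']
  have hholder := lintegral_prod_rpow_le_measure_univ_rpow_mul (μ := μ) s
    (f := fun i x => ENNReal.ofReal (f i x ^ P))
    (fun i hi => ((hf i hi).aestronglyMeasurable.aemeasurable.pow_const P).ennreal_ofReal)
    (p := fun i => a i / P) (by rwa [← Finset.sum_div, div_le_one hP])
    (fun i hi => div_nonneg (ha i hi) hP.le)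
  simp only [← Finset.sum_div] at hholder
  have hexp : 0 ≤ 1 - (∑ i ∈ s, a i) / P := sub_nonneg.2 ((div_le_one hP).2 haP)
  have hprod₀ : ∀ x, 0 ≤ ∏ i ∈ s, f i x ^ a i :=
    fun x => Finset.prod_nonneg fun i hi => Real.rpow_nonneg (hf₀ i hi x) _
  have hint₀ : ∀ i ∈ s, 0 ≤ ∫ x, f i x ^ P ∂μ :=
    fun i hi => integral_nonneg fun x => Real.rpow_nonneg (hf₀ i hi x) P
  rw [integral_eq_lintegral_of_nonneg_ae (.of_forall hprod₀)
    (Finset.aestronglyMeasurable_fun_prod s fun i hi =>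
      ((hf i hi).aestronglyMeasurable.aemeasurable.pow_const _).aestronglyMeasurable)]
  refine ENNReal.toReal_le_of_le_ofReal
    (mul_nonneg (Real.rpow_nonneg measureReal_nonneg _)
      (Finset.prod_nonneg fun i hi => Real.rpow_nonneg (hint₀ i hi) _)) ?_
  calc ∫⁻ x, ENNReal.ofReal (∏ i ∈ s, f i x ^ a i) ∂μ
      = ∫⁻ x, ∏ i ∈ s, ENNReal.ofReal (f i x ^ P) ^ (a i / P) ∂μ := by
        refine lintegral_congr fun x => ?_
        rw [ENNReal.ofReal_prod_of_nonneg fun i hi => Real.rpow_nonneg (hf₀ i hi x) _]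
        exact Finset.prod_congr rfl fun i hi => (hpow i hi x).symm
    _ ≤ _ := hholder
    _ = _ := by
        rw [ENNReal.ofReal_mul (Real.rpow_nonneg measureReal_nonneg _),
          ← ENNReal.ofReal_rpow_of_nonneg measureReal_nonneg hexp,
          ofReal_measureReal, ENNReal.ofReal_prod_of_nonneg
            fun i hi => Real.rpow_nonneg (hint₀ i hi) _]
        refine congrArg _ (Finset.prod_congr rfl fun i hi => ?_)
        rw [← ENNReal.ofReal_rpow_of_nonneg (hint₀ i hi) (div_nonneg (ha i hi) hP.le),
          ofReal_integral_rpow_eq_lintegral hP (hf₀ i hi) (hf i hi)]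

theorem integral_mul_mul_rpow_le [IsFiniteMeasure μ] {u v w : X → ℝ} {α β q P : ℝ}
    (hP : 0 < P) (hu₀ : 0 ≤ u) (hv₀ : 0 ≤ v) (hw₀ : 0 ≤ w)
    (hu : MemLp u (ENNReal.ofReal P) μ) (hv : MemLp v (ENNReal.ofReal P) μ)
    (hw : MemLp w (ENNReal.ofReal P) μ) (hα : 0 ≤ α) (hβ : 0 ≤ β) (hq : 0 ≤ q)
    (hsum : α + β + q ≤ P) :
    ∫ x, u x ^ α * v x ^ β * w x ^ q ∂μ ≤
      μ.real Set.univ ^ (1 - (α + β + q) / P) *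
        ((∫ x, u x ^ P ∂μ) ^ (α / P) * (∫ x, v x ^ P ∂μ) ^ (β / P) *
          (∫ x, w x ^ P ∂μ) ^ (q / P)) := by
  have h := integral_prod_rpow_le (μ := μ) Finset.univ (f := ![u, v, w]) (a := ![α, β, q]) hP
    (by intro i _; fin_cases i <;> assumption) (by intro i _; fin_cases i <;> assumption)
    (by intro i _; fin_cases i <;> assumption) (by simpa [Fin.sum_univ_three] using hsum)
  simpa [Fin.sum_univ_three, Fin.prod_univ_three, mul_assoc] using h

theorem integral_rpow_le_mul_one_add_rpow [IsFiniteMeasure μ] {u v w : X → ℝ}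
    {α β q P C₂ C₃ K₀ : ℝ} (hP : 0 < P) (hu₀ : 0 ≤ u) (hv₀ : 0 ≤ v) (hw₀ : 0 ≤ w)
    (hu : MemLp u (ENNReal.ofReal P) μ) (hv : MemLp v (ENNReal.ofReal P) μ)
    (hw : MemLp w (ENNReal.ofReal P) μ) (hα : 0 ≤ α) (hβ : 0 ≤ β) (hq : 0 ≤ q)
    (hsum : α + β + q ≤ P) (hC₂ : 0 ≤ C₂) (hC₃ : 0 ≤ C₃) (hK₀ : 0 ≤ K₀)
    (hu_le : (∫ x, u x ^ P ∂μ) ^ (1 / P) ≤ C₂ * (1 + (∫ x, w x ^ P ∂μ) ^ (1 / P)))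
    (hv_le : (∫ x, v x ^ P ∂μ) ^ (1 / P) ≤ C₃ * (1 + (∫ x, w x ^ P ∂μ) ^ (1 / P)))
    (hw_le : ∫ x, w x ^ P ∂μ ≤ ∫ x, u x ^ α * v x ^ β * w x ^ q ∂μ + K₀) :
    ∫ x, w x ^ P ∂μ ≤
      (μ.real Set.univ ^ (1 - (α + β + q) / P) * C₂ ^ α * C₃ ^ β + K₀) *
        (1 + (∫ x, w x ^ P ∂μ) ^ (1 / P)) ^ (α + β + q) := by
  set W := ∫ x, w x ^ P ∂μ
  set M := W ^ (1 / P)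
  have hW₀ : 0 ≤ W := integral_nonneg fun x => Real.rpow_nonneg (hw₀ x) P
  have hM₀ : 0 ≤ M := Real.rpow_nonneg hW₀ _
  have hU₀ : 0 ≤ ∫ x, u x ^ P ∂μ := integral_nonneg fun x => Real.rpow_nonneg (hu₀ x) P
  have hV₀ : 0 ≤ ∫ x, v x ^ P ∂μ := integral_nonneg fun x => Real.rpow_nonneg (hv₀ x) P
  have hu_pow : (∫ x, u x ^ P ∂μ) ^ (α / P) ≤ (C₂ * (1 + M)) ^ α :=
    Real.rpow_div_le_rpow_of_rpow_one_div_le hU₀ hα hu_le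
  have hv_pow : (∫ x, v x ^ P ∂μ) ^ (β / P) ≤ (C₃ * (1 + M)) ^ β :=
    Real.rpow_div_le_rpow_of_rpow_one_div_le hV₀ hβ hv_le
  have hw_pow : W ^ (q / P) ≤ (1 + M) ^ q :=
    Real.rpow_div_le_rpow_of_rpow_one_div_le hW₀ hq (show M ≤ 1 + M by linarith)
  have hone : 1 ≤ (1 + M) ^ (α + β + q) := Real.one_le_rpow (by linarith) (by positivity)
  calc W ≤ ∫ x, u x ^ α * v x ^ β * w x ^ q ∂μ + K₀ := hw_le
    _ ≤ μ.real Set.univ ^ (1 - (α + β + q) / P) *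
          ((C₂ * (1 + M)) ^ α * (C₃ * (1 + M)) ^ β * (1 + M) ^ q) + K₀ := by
        refine add_le_add_left ((integral_mul_mul_rpow_le hP hu₀ hv₀ hw₀ hu hv hw hα hβ hq
          hsum).trans ?_) K₀
        gcongr
    _ = μ.real Set.univ ^ (1 - (α + β + q) / P) * C₂ ^ α * C₃ ^ β *
          (1 + M) ^ (α + β + q) + K₀ := by
        rw [Real.mul_rpow hC₂ (by linarith), Real.mul_rpow hC₃ (by linarith),
          Real.rpow_add (by linarith), Real.rpow_add (by linarith)]
        ring
    _ ≤ _ := by nlinarith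

end MeasureTheory

theorem stmt_7_general (q γ α β C₂ C₃ K₀ : ℝ) (V : ℝ≥0∞)
    (hq : 1 < q) (hα : 1 ≤ α) (hβ : 1 ≤ β) (hab : α + β < γ)
    (hC₂ : 0 ≤ C₂) (hC₃ : 0 ≤ C₃) (hK₀ : 0 ≤ K₀)
    (hV : V ≠ ⊤) :
    ∃ C : ℝ, ∀ (X : Type) (_ : MeasurableSpace X) (μ : Measure X),
      μ Set.univ = V →
      ∀ u v w : X → ℝ,
        (∀ x, 0 ≤ u x) → (∀ x, 0 ≤ v x) → (∀ x, 0 ≤ w x) →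
        MemLp u (ENNReal.ofReal (q + γ)) μ →
        MemLp v (ENNReal.ofReal (q + γ)) μ →
        MemLp w (ENNReal.ofReal (q + γ)) μ →
        (∫ x, u x ^ (q + γ) ∂μ) ^ (1 / (q + γ)) ≤
          C₂ * (1 + (∫ x, w x ^ (q + γ) ∂μ) ^ (1 / (q + γ))) →
        (∫ x, v x ^ (q + γ) ∂μ) ^ (1 / (q + γ)) ≤
          C₃ * (1 + (∫ x, w x ^ (q + γ) ∂μ) ^ (1 / (q + γ))) →
        (∫ x, w x ^ (q + γ) ∂μ) ≤ (∫ x, u x ^ α * v x ^ β * w x ^ q ∂μ) + K₀ →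
        (∫ x, w x ^ (q + γ) ∂μ) ^ (1 / (q + γ)) ≤ C := by
  set P := q + γ
  set σ := α + β + q
  have hσP : σ < P := by linarith
  set K := V.toReal ^ (1 - σ / P) * C₂ ^ α * C₃ ^ β + K₀
  refine ⟨max 1 ((2 ^ σ * K) ^ (1 / (P - σ))), ?_⟩
  intro X _ μ hμ u v w hu₀ hv₀ hw₀ hu hv hw hu_le hv_le hw_le
  have : IsFiniteMeasure μ := ⟨hμ ▸ hV.lt_top⟩
  have hW₀ : 0 ≤ ∫ x, w x ^ P ∂μ := integral_nonneg fun x => Real.rpow_nonneg (hw₀ x) P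
  have henergy := integral_rpow_le_mul_one_add_rpow (by linarith) hu₀ hv₀ hw₀ hu hv hw
    (by linarith) (by linarith) (by linarith) hσP.le hC₂ hC₃ hK₀ hu_le hv_le hw_le
  rw [measureReal_def, hμ] at henergy
  refine le_max_one_of_rpow_le_mul_one_add_rpow (Real.rpow_nonneg hW₀ _) (by positivity) hσP ?_
  rwa [one_div, Real.rpow_inv_rpow hW₀ (by linarith), ← one_div]

/-- Core integral estimate of Theorem 1: under the duality bounds relating `u, v` to `w`,
the energy inequality, and admissible Hölder exponents with `α + β < γ`, the
`L^(q+γ)` norm of `w` is bounded by a constant depending only on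
`C₂, C₃, K₀, α, β, γ, q` and the total measure `V` of `Q_T`. -/
theorem stmt_7 (q γ α β r s C₂ C₃ K₀ : ℝ) (V : ℝ≥0∞)
    (hq : 1 < q) (hγ : 1 ≤ γ) (hα : 1 ≤ α) (hβ : 1 ≤ β) (hab : α + β < γ)
    (hC₂ : 0 ≤ C₂) (hC₃ : 0 ≤ C₃) (hK₀ : 0 ≤ K₀)
    (hr : 1 < r) (hs : 1 < s)
    (hrs : 1 / r + 1 / s + q / (q + γ) = 1)
    (hrα : r * α ≤ q + γ) (hsβ : s * β ≤ q + γ) (hV : V ≠ ⊤) :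
    ∃ C : ℝ, ∀ (X : Type) (_ : MeasurableSpace X) (μ : Measure X),
      μ Set.univ = V →
      ∀ u v w : X → ℝ,
        (∀ x, 0 ≤ u x) → (∀ x, 0 ≤ v x) → (∀ x, 0 ≤ w x) →
        MemLp u (ENNReal.ofReal (q + γ)) μ →
        MemLp v (ENNReal.ofReal (q + γ)) μ →
        MemLp w (ENNReal.ofReal (q + γ)) μ →
        (∫ x, u x ^ (q + γ) ∂μ) ^ (1 / (q + γ)) ≤
          C₂ * (1 + (∫ x, w x ^ (q + γ) ∂μ) ^ (1 / (q + γ))) →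
        (∫ x, v x ^ (q + γ) ∂μ) ^ (1 / (q + γ)) ≤
          C₃ * (1 + (∫ x, w x ^ (q + γ) ∂μ) ^ (1 / (q + γ))) →
        (∫ x, w x ^ (q + γ) ∂μ) ≤ (∫ x, u x ^ α * v x ^ β * w x ^ q ∂μ) + K₀ →
        (∫ x, w x ^ (q + γ) ∂μ) ^ (1 / (q + γ)) ≤ C :=
  stmt_7_general q γ α β C₂ C₃ K₀ V hq hα hβ hab hC₂ hC₃ hK₀ hV
end

section
/- Let u, w : [0,T] → [0,∞) be measurable with ∫₀ᵗ ‖w(s)‖_{L^p(Ω)} ds ≤ t^(1/p')·C·(1 + ‖u‖_{L^p(Q_t)}) for all t, where p' = p/(p-1), p > 1. If ‖u(t)‖_{L^p(Ω)} ≤ ‖u₀‖_{L^p(Ω)} + ∫₀ᵗ ‖w(s)‖_{L^p(Ω)} ds for all t ∈ [0,T], then ‖u‖_{L^p(Q_T)} is bounded by a constant depending only on T, p, C, and ‖u₀‖_{L^p(Ω)}. -/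
open intervalIntegral

/-- `(a+b)^p ≤ 2^p (a^p + b^p)` for nonnegative reals and nonnegative exponent. -/
lemma stmt_11_rpow_add_le {a b p : ℝ} (ha : 0 ≤ a) (hb : 0 ≤ b) (hp : 0 ≤ p) :
    (a + b) ^ p ≤ 2 ^ p * (a ^ p + b ^ p) := by
  have h1 : a + b ≤ 2 * max a b := by
    have := add_le_add (le_max_left a b) (le_max_right a b)
    linarith [this]
  have hmax : 0 ≤ max a b := le_trans ha (le_max_left a b)
  calc (a + b) ^ p ≤ (2 * max a b) ^ p :=
        Real.rpow_le_rpow (by linarith) h1 hp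
    _ = 2 ^ p * (max a b) ^ p := Real.mul_rpow (by norm_num) hmax
    _ ≤ 2 ^ p * (a ^ p + b ^ p) := by
        have h2 : (max a b) ^ p ≤ a ^ p + b ^ p := by
          rcases max_cases a b with ⟨h, _⟩ | ⟨h, _⟩ <;> rw [h]
          · linarith [Real.rpow_nonneg hb p]
          · linarith [Real.rpow_nonneg ha p]
        have h3 : (0:ℝ) ≤ 2 ^ p := Real.rpow_nonneg (by norm_num) p
        nlinarith

/-- Duhamel + Hölder + Gronwall bound: if `U(t) = ‖u(t)‖_{L^p(Ω)}` satisfies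
`U(t) ≤ U₀ + ∫₀ᵗ W(s) ds` and `∫₀ᵗ W(s) ds ≤ t^(1/p') C (1 + (∫₀ᵗ U^p)^(1/p))`,
then `(∫₀ᵀ U^p)^(1/p)` is bounded by a constant depending only on `T, p, C, U₀`. -/
theorem stmt_11 (T p C U₀ : ℝ) (hT : 0 < T) (hp : 1 < p) (hC : 0 ≤ C) (hU₀ : 0 ≤ U₀) :
    ∃ C' : ℝ, ∀ U W : ℝ → ℝ,
      (∀ t ∈ Set.Icc 0 T, 0 ≤ U t) →
      (∀ t ∈ Set.Icc 0 T, 0 ≤ W t) →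
      IntervalIntegrable W MeasureTheory.volume 0 T →
      IntervalIntegrable (fun s => U s ^ p) MeasureTheory.volume 0 T →
      (∀ t ∈ Set.Icc 0 T,
        (∫ s in (0:ℝ)..t, W s) ≤
          t ^ (1 / (p / (p - 1))) * C * (1 + (∫ s in (0:ℝ)..t, U s ^ p) ^ (1 / p))) →
      (∀ t ∈ Set.Icc 0 T, U t ≤ U₀ + ∫ s in (0:ℝ)..t, W s) →
      (∫ s in (0:ℝ)..T, U s ^ p) ^ (1 / p) ≤ C' := by
  have hp0 : (0:ℝ) < p := lt_trans one_pos hp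
  have hp1 : (0:ℝ) < p - 1 := by linarith
  set q : ℝ := 1 / (p / (p - 1)) with hq
  have hq0 : 0 ≤ q := by
    have : 0 < p / (p - 1) := div_pos hp0 hp1
    positivity
  set N : ℝ := T ^ q * C with hN
  have hN0 : 0 ≤ N := mul_nonneg (Real.rpow_nonneg hT.le q) hC
  set M : ℝ := U₀ + N with hM
  have hM0 : 0 ≤ M := add_nonneg hU₀ hN0
  set A : ℝ := 2 ^ p * M ^ p with hA
  set B : ℝ := 2 ^ p * N ^ p with hB
  have h2p : (0:ℝ) ≤ 2 ^ p := Real.rpow_nonneg (by norm_num) p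
  have hA0 : 0 ≤ A := mul_nonneg h2p (Real.rpow_nonneg hM0 p)
  have hB0 : 0 ≤ B := mul_nonneg h2p (Real.rpow_nonneg hN0 p)
  refine ⟨(gronwallBound 0 B A T) ^ (1/p), ?_⟩
  intro U W hU hW hWint hUint hHolder hDuh
  set G : ℝ → ℝ := fun t => ∫ s in (0:ℝ)..t, U s ^ p with hG
  have huIcc : Set.uIcc (0:ℝ) T = Set.Icc 0 T := Set.uIcc_of_le hT.le
  -- nonnegativity of G
  have hGnn : ∀ t ∈ Set.Icc (0:ℝ) T, 0 ≤ G t := by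
    intro t ht
    refine intervalIntegral.integral_nonneg ht.1 ?_
    intro s hs
    exact Real.rpow_nonneg (hU s ⟨hs.1, le_trans hs.2 ht.2⟩) p
  -- key pointwise bound
  have hkey : ∀ s ∈ Set.Icc (0:ℝ) T, U s ^ p ≤ A + B * G s := by
    intro s hs
    have hGs : 0 ≤ G s := hGnn s hs
    have hGsp : 0 ≤ G s ^ (1/p) := Real.rpow_nonneg hGs _
    have h1 : U s ≤ M + N * G s ^ (1/p) := by
      have hsq : s ^ q ≤ T ^ q := Real.rpow_le_rpow hs.1 hs.2 hq0
      have h2 : s ^ q * C * (1 + G s ^ (1/p)) ≤ T ^ q * C * (1 + G s ^ (1/p)) := by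
        have h3 : s ^ q * C ≤ T ^ q * C := mul_le_mul_of_nonneg_right hsq hC
        exact mul_le_mul_of_nonneg_right h3 (by linarith)
      have h4 := le_trans (hHolder s hs) h2
      have h5 := hDuh s hs
      have : T ^ q * C * (1 + G s ^ (1/p)) = N + N * G s ^ (1/p) := by
        rw [hN]; ring
      rw [this] at h4
      rw [hM]; linarith
    have h6 : U s ^ p ≤ (M + N * G s ^ (1/p)) ^ p :=
      Real.rpow_le_rpow (hU s hs) h1 hp0.le
    have h7 : (M + N * G s ^ (1/p)) ^ p ≤ 2 ^ p * (M ^ p + (N * G s ^ (1/p)) ^ p) :=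
      stmt_11_rpow_add_le hM0 (mul_nonneg hN0 hGsp) hp0.le
    have h8 : (N * G s ^ (1/p)) ^ p = N ^ p * G s := by
      rw [Real.mul_rpow hN0 hGsp, ← Real.rpow_mul hGs, one_div_mul_cancel hp0.ne',
        Real.rpow_one]
    rw [h8] at h7
    calc U s ^ p ≤ 2 ^ p * (M ^ p + N ^ p * G s) := le_trans h6 h7
      _ = A + B * G s := by rw [hA, hB]; ring
  -- continuity of G on [0,T]
  have hGcont : ContinuousOn G (Set.Icc 0 T) := by
    rw [← huIcc]
    exact intervalIntegral.continuousOn_primitive_interval' hUint Set.left_mem_uIcc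
  -- the comparison function f and its primitive Φ
  set f : ℝ → ℝ := fun τ => A + B * G τ with hf
  have hfcont : ContinuousOn f (Set.Icc 0 T) :=
    continuousOn_const.add (continuousOn_const.mul hGcont)
  set Φ : ℝ → ℝ := fun t => ∫ τ in (0:ℝ)..t, f τ with hΦ
  have hfint : ∀ s ∈ Set.Icc (0:ℝ) T, IntervalIntegrable f MeasureTheory.volume 0 s := by
    intro s hs
    refine ContinuousOn.intervalIntegrable (hfcont.mono ?_)
    rw [Set.uIcc_of_le hs.1]
    exact Set.Icc_subset_Icc le_rfl hs.2
  have hUints : ∀ s ∈ Set.Icc (0:ℝ) T,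
      IntervalIntegrable (fun s => U s ^ p) MeasureTheory.volume 0 s := by
    intro s hs
    refine hUint.mono_set ?_
    rw [Set.uIcc_of_le hs.1, huIcc]
    exact Set.Icc_subset_Icc le_rfl hs.2
  -- G ≤ Φ on [0,T]
  have hGΦ : ∀ s ∈ Set.Icc (0:ℝ) T, G s ≤ Φ s := by
    intro s hs
    refine intervalIntegral.integral_mono_on hs.1 (hUints s hs) (hfint s hs) ?_
    intro x hx
    exact hkey x ⟨hx.1, le_trans hx.2 hs.2⟩
  have hΦnn : ∀ s ∈ Set.Icc (0:ℝ) T, 0 ≤ Φ s := fun s hs =>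
    le_trans (hGnn s hs) (hGΦ s hs)
  -- continuity of Φ
  have hΦcont : ContinuousOn Φ (Set.Icc 0 T) := by
    rw [← huIcc]
    refine intervalIntegral.continuousOn_primitive_interval' ?_ Set.left_mem_uIcc
    rw [huIcc] at *
    exact hfint T ⟨hT.le, le_rfl⟩
  -- derivative of Φ from the right
  have hΦderiv : ∀ x ∈ Set.Ico (0:ℝ) T, HasDerivWithinAt Φ (f x) (Set.Ici x) x := by
    intro x hx
    have hxIcc : x ∈ Set.Icc (0:ℝ) T := ⟨hx.1, hx.2.le⟩
    have hmemIoc : Set.Ioc x T ∈ nhdsWithin x (Set.Ioi x) :=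
      Ioc_mem_nhdsGT hx.2
    have hsub : Set.Ioc x T ⊆ Set.Icc 0 T := fun y hy => ⟨le_trans hx.1 hy.1.le, hy.2⟩
    refine intervalIntegral.integral_hasDerivWithinAt_right (hfint x hxIcc) ?_ ?_
    · exact ⟨Set.Ioc x T, hmemIoc, (hfcont.mono hsub).aestronglyMeasurable measurableSet_Ioc⟩
    · exact (hfcont x hxIcc).mono_of_mem_nhdsWithin
        (Filter.mem_of_superset hmemIoc hsub)
  -- Gronwall
  have hgron : ∀ x ∈ Set.Icc (0:ℝ) T, ‖Φ x‖ ≤ gronwallBound 0 B A (x - 0) := by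
    refine norm_le_gronwallBound_of_norm_deriv_right_le hΦcont hΦderiv ?_ ?_
    · simp [hΦ]
    · intro x hx
      have hxIcc : x ∈ Set.Icc (0:ℝ) T := ⟨hx.1, hx.2.le⟩
      have h1 : 0 ≤ f x := by
        have := hGnn x hxIcc
        simp only [hf]
        nlinarith
      rw [Real.norm_of_nonneg h1, Real.norm_of_nonneg (hΦnn x hxIcc)]
      have h2 : B * G x ≤ B * Φ x := mul_le_mul_of_nonneg_left (hGΦ x hxIcc) hB0
      simp only [hf]
      linarith
  have hfinal : G T ≤ gronwallBound 0 B A T := by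
    have h1 := hgron T ⟨hT.le, le_rfl⟩
    rw [sub_zero, Real.norm_of_nonneg (hΦnn T ⟨hT.le, le_rfl⟩)] at h1
    exact le_trans (hGΦ T ⟨hT.le, le_rfl⟩) h1
  exact Real.rpow_le_rpow (hGnn T ⟨hT.le, le_rfl⟩) hfinal (by positivity)
end
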